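/- For all ξ₁, ξ₂ ∈ ℝ with ξ₁ ≠ 0, ξ₂ ≠ 0 and ξ₁ + ξ₂ ≠ 0, and for all signs μ, ν ∈ {+1, −1}, the phase Φ_{μν}(ξ₁, ξ₂) = √|ξ₁+ξ₂| − μ√|ξ₁| − ν√|ξ₂| is nonzero; i.e., the dispersion relation λ(ξ) = √|ξ| admits no three-wave resonances away from the degenerate set {ξ₁ ξ₂ (ξ₁+ξ₂) = 0}. -/

import Mathlib

open MeasureTheory Complex Filter
open scoped ENNReal FourierTransform Real

noncomputable section

/-- Complexification of a real-valued function. -/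
def cplx (f : ℝ → ℝ) : ℝ → ℂ := fun x => (f x : ℂ)

/-- `L²`-based Sobolev norm `H^s` on `ℝ`, as an extended nonnegative real. -/
def HNorm (s : ℝ) (u : ℝ → ℂ) : ℝ≥0∞ :=
  (∫⁻ ξ : ℝ, ENNReal.ofReal ((1 + ξ ^ 2) ^ s) * (‖𝓕 u ξ‖₊ : ℝ≥0∞) ^ 2) ^ (1/2 : ℝ)

/-- A Littlewood–Paley family: a smooth bump supported in the annulus `1/2 ≤ |ξ| ≤ 2`
whose dyadic dilates form a partition of unity away from the origin. -/
structure LPFamily where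
  χ : ℝ → ℝ
  smooth : ContDiff ℝ (⊤ : ℕ∞) χ
  supp : ∀ ξ : ℝ, χ ξ ≠ 0 → |ξ| ∈ Set.Icc (1/2 : ℝ) 2
  hsum : ∀ ξ : ℝ, ξ ≠ 0 → HasSum (fun k : ℤ => χ (ξ / 2 ^ k)) 1

/-- Littlewood–Paley projection `P_k` onto frequencies `|ξ| ≈ 2^k`. -/
def LP (χ : ℝ → ℝ) (k : ℤ) (u : ℝ → ℂ) : ℝ → ℂ :=
  𝓕⁻ (fun ξ => (χ (ξ / 2 ^ k) : ℂ) * 𝓕 u ξ)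

/-- Low-frequency Littlewood–Paley projection `P_{≤0}`. -/
def LPlow (χ : ℝ → ℝ) (u : ℝ → ℂ) : ℝ → ℂ :=
  𝓕⁻ (fun ξ => ((1 - ∑' k : ℕ, χ (ξ / 2 ^ (k + 1)) : ℝ) : ℂ) * 𝓕 u ξ)

/-- Sup-norm, as an extended nonnegative real. -/
def LooNorm (f : ℝ → ℂ) : ℝ≥0∞ := ⨆ x : ℝ, (‖f x‖₊ : ℝ≥0∞)

/-- The Hölder–Zygmund (Besov `B^γ_{∞,∞}`) norm `C_*^γ` (relative to a LP family `χ`). -/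
def BesovNorm (χ : ℝ → ℝ) (γ : ℝ) (u : ℝ → ℂ) : ℝ≥0∞ :=
  LooNorm (LPlow χ u) ⊔
    ⨆ k : ℕ, ENNReal.ofReal ((2:ℝ) ^ (γ * ((k:ℝ) + 1))) * LooNorm (LP χ (k + 1) u)

/-- The fractional derivative `|∇|^s`: Fourier multiplier with symbol `|ξ|^s`. -/
def fracD (s : ℝ) (u : ℝ → ℂ) : ℝ → ℂ :=
  𝓕⁻ (fun ξ => ((|ξ| ^ s : ℝ) : ℂ) * 𝓕 u ξ)

/-- The half-wave propagator `e^{-itΛ}`, `Λ = |∇|^{1/2}`. -/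
def halfWave (t : ℝ) (u : ℝ → ℂ) : ℝ → ℂ :=
  𝓕⁻ (fun ξ => Complex.exp (-(t * Real.sqrt |ξ|) * Complex.I) * 𝓕 u ξ)

/-- `Ψ` is harmonic at the point `p` (of class `C²` with vanishing Laplacian). -/
def IsHarmonicAt (Ψ : ℝ × ℝ → ℝ) (p : ℝ × ℝ) : Prop :=
  ContDiffAt ℝ 2 Ψ p ∧
    fderiv ℝ (fun q => fderiv ℝ Ψ q (1, 0)) p (1, 0)
      + fderiv ℝ (fun q => fderiv ℝ Ψ q (0, 1)) p (0, 1) = 0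

/-- `g = G(h)ψ` is the Dirichlet-to-Neumann operator of the domain `{(x,y) : y < h(x)}`
applied to `ψ`: there is a bounded harmonic extension `Ψ` of `ψ` to the domain with
`g = √(1+h'²)·∂_nΨ = ∂_yΨ - h'·∂_xΨ` on the boundary graph. -/
def IsDtN (h ψ g : ℝ → ℝ) : Prop :=
  ∃ Ψ : ℝ × ℝ → ℝ,
    (∀ p : ℝ × ℝ, p.2 < h p.1 → IsHarmonicAt Ψ p) ∧
    (∃ M : ℝ, ∀ p : ℝ × ℝ, p.2 ≤ h p.1 → |Ψ p| ≤ M) ∧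
    ContinuousOn Ψ {p : ℝ × ℝ | p.2 ≤ h p.1} ∧
    (∀ x : ℝ, Ψ (x, h x) = ψ x) ∧
    (∀ x : ℝ, DifferentiableAt ℝ Ψ (x, h x) ∧
      g x = fderiv ℝ Ψ (x, h x) (0, 1) - deriv h x * fderiv ℝ Ψ (x, h x) (1, 0))

/-- `B = B(h)ψ = (G(h)ψ + h'ψ')/(1 + h'²)`, where `g = G(h)ψ`. -/
def Bfun (h ψ g : ℝ → ℝ) : ℝ → ℝ :=
  fun x => (g x + deriv h x * deriv ψ x) / (1 + (deriv h x) ^ 2)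

/-- `V = V(h)ψ = ψ' - h'·B(h)ψ`, where `g = G(h)ψ`. -/
def Vfun (h ψ g : ℝ → ℝ) : ℝ → ℝ :=
  fun x => deriv ψ x - deriv h x * Bfun h ψ g x

/-- An admissible paraproduct cutoff: smooth `φ(ξ₁,ξ₂)`, equal to `1` for
`|ξ₁| ≪ |ξ₂|`, `|ξ₂| ≫ 1` and to `0` for `|ξ₁| ≳ |ξ₂|` or `|ξ₂| ≲ 1`. -/
structure ParaCutoff where
  φ : ℝ × ℝ → ℝ
  smooth : ContDiff ℝ (⊤ : ℕ∞) φ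
  ε₁ : ℝ
  ε₂ : ℝ
  M₁ : ℝ
  M₂ : ℝ
  hε₁ : 0 < ε₁
  hε₁₂ : ε₁ < ε₂
  hM₁ : 0 < M₁
  hM₁₂ : M₁ < M₂
  eq_one : ∀ ξ₁ ξ₂ : ℝ, |ξ₁| ≤ ε₁ * |ξ₂| → M₂ ≤ |ξ₂| → φ (ξ₁, ξ₂) = 1
  eq_zero : ∀ ξ₁ ξ₂ : ℝ, ε₂ * |ξ₂| ≤ |ξ₁| ∨ |ξ₂| ≤ M₁ → φ (ξ₁, ξ₂) = 0

/-- The paraproduct `T_f g` with cutoff `φ`. -/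
def paraprod (φ : ℝ × ℝ → ℝ) (f g : ℝ → ℂ) : ℝ → ℂ :=
  𝓕⁻ (fun ξ => ∫ ξ₁ : ℝ, (φ (ξ₁, ξ - ξ₁) : ℂ) * 𝓕 f ξ₁ * 𝓕 g (ξ - ξ₁))

/-- The good unknown `w = ψ - T_B h`. -/
def wfun (φ : ℝ × ℝ → ℝ) (h ψ g : ℝ → ℝ) : ℝ → ℂ :=
  fun x => (ψ x : ℂ) - paraprod φ (cplx (Bfun h ψ g)) (cplx h) x

/-- `(h, ψ)` solves the gravity water wave system (Zakharov formulation) on `[0,T]`,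
with `g t = G(h(t))ψ(t)` the Dirichlet-to-Neumann term. -/
def IsWWSolution (T : ℝ) (h ψ g : ℝ → ℝ → ℝ) : Prop :=
  ∀ t ∈ Set.Icc (0:ℝ) T,
    IsDtN (h t) (ψ t) (g t) ∧
    ∀ x : ℝ,
      HasDerivAt (fun τ => h τ x) (g t x) t ∧
      HasDerivAt (fun τ => ψ τ x)
        (-(h t x) - (deriv (ψ t) x) ^ 2 / 2
          + (g t x + deriv (h t) x * deriv (ψ t) x) ^ 2
            / (2 * (1 + (deriv (h t) x) ^ 2))) t

/-- `t ↦ f t` belongs to `C([0,T], H^s)`. -/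
def ContInH (s T : ℝ) (f : ℝ → ℝ → ℂ) : Prop :=
  (∀ t ∈ Set.Icc (0:ℝ) T, HNorm s (f t) < ⊤) ∧
  ∀ t ∈ Set.Icc (0:ℝ) T,
    Tendsto (fun τ => HNorm s (fun x => f τ x - f t x))
      (nhdsWithin t (Set.Icc (0:ℝ) T)) (nhds 0)

/-- The phase `Φ_{μν}(ξ₁,ξ₂) = √|ξ₁+ξ₂| - μ√|ξ₁| - ν√|ξ₂|` (`μ, ν ∈ {1,-1}`). -/
def PhiFn (μ ν : ℝ) (ξ₁ ξ₂ : ℝ) : ℝ :=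
  Real.sqrt |ξ₁ + ξ₂| - μ * Real.sqrt |ξ₁| - ν * Real.sqrt |ξ₂|

/-- First basic quadratic symbol of the water wave nonlinearity. -/
def msym₁ (ξ₁ ξ₂ : ℝ) : ℝ :=
  (|ξ₁ + ξ₂| * |ξ₂| - (ξ₁ + ξ₂) * ξ₂) / Real.sqrt |ξ₂|

/-- Second basic quadratic symbol of the water wave nonlinearity. -/
def msym₂ (ξ₁ ξ₂ : ℝ) : ℝ :=
  Real.sqrt |ξ₁ + ξ₂| * (|ξ₁| * |ξ₂| + ξ₁ * ξ₂) / Real.sqrt (|ξ₁| * |ξ₂|)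

/-- A linear combination `a·m₁ + b·m₂` of the two basic quadratic symbols. -/
def msym (a b : ℂ) (ξ₁ ξ₂ : ℝ) : ℂ := a * (msym₁ ξ₁ ξ₂ : ℂ) + b * (msym₂ ξ₁ ξ₂ : ℂ)

/-- The bilinear Fourier multiplier with symbol `m(ξ₁,ξ₂)/(iΦ_{μν}(ξ₁,ξ₂))`. -/
def Qop (μ ν : ℝ) (m : ℝ → ℝ → ℂ) (f g : ℝ → ℂ) : ℝ → ℂ :=
  𝓕⁻ (fun ξ => ∫ ξ₁ : ℝ,
    m ξ₁ (ξ - ξ₁) / (Complex.I * (PhiFn μ ν ξ₁ (ξ - ξ₁) : ℂ)) * 𝓕 f ξ₁ * 𝓕 g (ξ - ξ₁))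

/-- `pick 1 u = u`, `pick (-1) u = conj u`. -/
def pick (μ : ℝ) (u : ℝ → ℂ) : ℝ → ℂ :=
  if μ = 1 then u else fun x => (starRingEnd ℂ) (u x)

/-- The complex unknown `u = h + i|∇|^{1/2}ψ`. -/
def uOf (h ψ : ℝ → ℝ) : ℝ → ℂ :=
  fun x => (h x : ℂ) + Complex.I * fracD (1/2) (cplx ψ) x

/-- The full nonlinearity `N = (G(h)-|∇|)ψ + (i/2)|∇|^{1/2}((1+h'²)B² - ψ'²)`. -/
def Nfun (h ψ g : ℝ → ℝ) : ℝ → ℂ := fun x =>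
  ((g x : ℂ) - fracD 1 (cplx ψ) x)
  + (Complex.I / 2) * fracD (1/2)
      (fun y => (((1 + (deriv h y) ^ 2) * (Bfun h ψ g y) ^ 2 - (deriv ψ y) ^ 2 : ℝ) : ℂ)) x

/-- The cubic remainder `B₃ = B - |∇|ψ + |∇|(h|∇|ψ) + hψ''`. -/
def B3fun (h ψ g : ℝ → ℝ) : ℝ → ℂ := fun x =>
  (Bfun h ψ g x : ℂ) - fracD 1 (cplx ψ) x
  + fracD 1 (fun y => (h y : ℂ) * fracD 1 (cplx ψ) y) x
  + (h x : ℂ) * ((deriv (deriv ψ) x : ℝ) : ℂ)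

/-- The cubic part `N₃ = B₃ + h'²B + (i/2)|∇|^{1/2}(B² - (|∇|ψ)² + h'²B²)`. -/
def N3fun (h ψ g : ℝ → ℝ) : ℝ → ℂ := fun x =>
  B3fun h ψ g x + (((deriv h x) ^ 2 * Bfun h ψ g x : ℝ) : ℂ)
  + (Complex.I / 2) * fracD (1/2)
      (fun y => ((Bfun h ψ g y : ℂ)) ^ 2 - (fracD 1 (cplx ψ) y) ^ 2
        + (((deriv h y) ^ 2 : ℝ) : ℂ) * ((Bfun h ψ g y : ℂ)) ^ 2) x

/-- `L⁴` norm in time on `[0,T]` of the `C_*^ρ` norm. -/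
def L4Besov (χ : ℝ → ℝ) (ρ T : ℝ) (u : ℝ → ℝ → ℂ) : ℝ≥0∞ :=
  (∫⁻ t in Set.Icc (0:ℝ) T, (BesovNorm χ ρ (u t)) ^ 4) ^ (1/4 : ℝ)

/-- The energy `E_s(t) = ‖h(t)‖_{H^s} + ‖|∇|^{1/2}w(t)‖_{H^s}`. -/
def Es (φ : ℝ × ℝ → ℝ) (s : ℝ) (h ψ g : ℝ → ℝ → ℝ) (t : ℝ) : ℝ≥0∞ :=
  HNorm s (cplx (h t)) + HNorm s (fracD (1/2) (wfun φ (h t) (ψ t) (g t)))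

/-- `F_s = sup_{t ∈ [0,T]} ‖u(t)‖_{H^s}`. -/
def FsSup (s T : ℝ) (u : ℝ → ℝ → ℂ) : ℝ≥0∞ :=
  ⨆ t ∈ Set.Icc (0:ℝ) T, HNorm s (u t)

/-- The cubic bulk bilinear term `C_{μν} = Q_{μν}[u_μ, N_ν] + Q_{μν}[N_μ, u_ν]`. -/
def Cop (μ ν : ℝ) (m : ℝ → ℝ → ℂ) (u N : ℝ → ℂ) : ℝ → ℂ := fun x =>
  Qop μ ν m (pick μ u) (pick ν N) x + Qop μ ν m (pick μ N) (pick ν u) x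

/-- absence of three-wave resonances for the dispersion relation
`λ(ξ) = √|ξ|` away from the degenerate set. -/
theorem no_three_wave_resonance (ξ₁ ξ₂ : ℝ) (h1 : ξ₁ ≠ 0) (h2 : ξ₂ ≠ 0)
    (h3 : ξ₁ + ξ₂ ≠ 0) (μ ν : ℝ) (hμ : μ = 1 ∨ μ = -1) (hν : ν = 1 ∨ ν = -1) :
    PhiFn μ ν ξ₁ ξ₂ ≠ 0 := by
  have hap : 0 < Real.sqrt |ξ₁| := Real.sqrt_pos.2 (abs_pos.2 h1)
  have hbp : 0 < Real.sqrt |ξ₂| := Real.sqrt_pos.2 (abs_pos.2 h2)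
  have hcp : 0 < Real.sqrt |ξ₁ + ξ₂| := Real.sqrt_pos.2 (abs_pos.2 h3)
  have ha2 : Real.sqrt |ξ₁| ^ 2 = |ξ₁| := Real.sq_sqrt (abs_nonneg _)
  have hb2 : Real.sqrt |ξ₂| ^ 2 = |ξ₂| := Real.sq_sqrt (abs_nonneg _)
  have hc2 : Real.sqrt |ξ₁ + ξ₂| ^ 2 = |ξ₁ + ξ₂| := Real.sq_sqrt (abs_nonneg _)
  have t1 : |ξ₁ + ξ₂| ≤ |ξ₁| + |ξ₂| := abs_add_le _ _
  have t2 : |ξ₁| ≤ |ξ₁ + ξ₂| + |ξ₂| := by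
    have := abs_add_le (ξ₁ + ξ₂) (-ξ₂); simpa using this
  have t3 : |ξ₂| ≤ |ξ₁ + ξ₂| + |ξ₁| := by
    have := abs_add_le (ξ₁ + ξ₂) (-ξ₁)
    rw [show ξ₁ + ξ₂ + -ξ₁ = ξ₂ by ring] at this
    simpa [abs_neg] using this
  unfold PhiFn
  rcases hμ with rfl | rfl <;> rcases hν with rfl | rfl <;> intro h <;>
    nlinarith [ha2, hb2, hc2, t1, t2, t3, mul_pos hap hbp, mul_pos hap hcp,
      mul_pos hbp hcp]

end
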